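/- arXiv:2109.06078 — 2 statements merged into one kernel-verified Lean document; each statement's English description precedes it below -/
import Mathlib

section
/- Let (X, d_X) and (Y, d_Y) be metric spaces, let K ⊆ X × Y be compact with respect to the product metric, and fix ε > 0 and m ≥ 0. Then the map Y ∋ y ↦ S^m_{X,ε}(K^y) ∈ [0,∞], where K^y := {x ∈ X : (x, y) ∈ K}, is upper semicontinuous on Y. -/
open MeasureTheory ENNReal Filter Metric Topology

noncomputable section

/-- the `d`-dimensional `ε`-spherical Hausdorff pre-measure `S^d_{X,ε}`: infimum over
countable covers by open balls of diameter `< ε` of the sum of the `d`-th powers of the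
diameters (with `inf ∅ = ∞`). -/
def sphPre (X : Type*) [MetricSpace X] (d ε : ℝ) (A : Set X) : ℝ≥0∞ :=
  ⨅ (c : ℕ → Set X) (_ : A ⊆ ⋃ i, c i)
    (_ : ∀ i, (∃ z : X, ∃ s : ℝ, 0 < s ∧ c i = Metric.ball z s) ∧ Metric.diam (c i) < ε),
    ∑' i, ENNReal.ofReal (Metric.diam (c i)) ^ d

/-- If `K ⊆ X × Y` is compact, then `y ↦ S^m_{X,ε}(K^y)` is upper semicontinuous, where
`K^y = {x : (x,y) ∈ K}`. -/
theorem upperSemicontinuous_sphPre_section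
    {X Y : Type*} [MetricSpace X] [MetricSpace Y]
    {K : Set (X × Y)} (hK : IsCompact K) {m ε : ℝ} (hm : 0 ≤ m) (hε : 0 < ε) :
    UpperSemicontinuous fun y : Y => sphPre X m ε {x : X | (x, y) ∈ K} := by
  intro y₀ t ht
  obtain ⟨c, hc⟩ := iInf_lt_iff.mp ht
  obtain ⟨hcov, hc⟩ := iInf_lt_iff.mp hc
  obtain ⟨hball, hsum⟩ := iInf_lt_iff.mp hc
  set U : Set X := ⋃ i, c i with hU
  have hUopen : IsOpen U := isOpen_iUnion fun i => by
    obtain ⟨⟨z, s, _, hzs⟩, _⟩ := hball i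
    rw [hzs]; exact isOpen_ball
  have hCcomp : IsCompact (K \ U ×ˢ (Set.univ : Set Y)) :=
    hK.diff (hUopen.prod isOpen_univ)
  have hPcomp : IsCompact (Prod.snd '' (K \ U ×ˢ (Set.univ : Set Y))) :=
    hCcomp.image continuous_snd
  have hy₀ : y₀ ∉ Prod.snd '' (K \ U ×ˢ (Set.univ : Set Y)) := by
    rintro ⟨⟨x, y⟩, ⟨hK', hnU⟩, rfl⟩
    exact hnU ⟨hcov hK', trivial⟩
  have hnb : (Prod.snd '' (K \ U ×ˢ (Set.univ : Set Y)))ᶜ ∈ 𝓝 y₀ :=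
    hPcomp.isClosed.isOpen_compl.mem_nhds hy₀
  filter_upwards [hnb] with y hy
  have hsub : {x : X | (x, y) ∈ K} ⊆ U := by
    intro x hx
    by_contra hxU
    exact hy ⟨(x, y), ⟨hx, fun h => hxU h.1⟩, rfl⟩
  calc sphPre X m ε {x : X | (x, y) ∈ K}
      ≤ ∑' i, ENNReal.ofReal (Metric.diam (c i)) ^ m :=
        iInf_le_of_le c (iInf_le_of_le hsub (iInf_le_of_le hball le_rfl))
    _ < t := hsum

end
end

section
/- For all positive integers n and k there exists a constant C = C(n,k) ≥ 1 such that for every r > 0, every s with 0 < s < r/5, and all pairwise distinct points x_1, …, x_k in the closed ball B_r ⊆ ℝⁿ centered at the origin, the Lebesgue measure in ℝ^{nk} satisfies C^{-1} s^{nk} ≤ L^{nk}( B_r^{×k} ∩ ⋃_{σ ∈ S_k} B((x_{σ(1)},…,x_{σ(k)}), s) ) ≤ C s^{nk}, where B(z,s) denotes the open Euclidean ball of radius s in ℝ^{nk} and S_k the symmetric group on k letters. -/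
open MeasureTheory ENNReal Metric

noncomputable section

abbrev Euc (n : ℕ) : Type := EuclideanSpace ℝ (Fin n)

set_option maxHeartbeats 1000000 in
/-- Two-sided volume estimate for balls of the `L²`-transportation (quotient) metric on
`k`-point configurations inside `B_r`: there is `C = C(n,k) ≥ 1` such that for all
`0 < s < r/5` and all pairwise distinct `x_1, …, x_k ∈ B_r`,
`C⁻¹ s^{nk} ≤ L^{nk}(B_r^{×k} ∩ ⋃_{σ ∈ S_k} B((x_{σ(1)},…,x_{σ(k)}), s)) ≤ C s^{nk}`. -/
theorem quotient_ball_volume_bounds (n k : ℕ) (hn : 0 < n) (hk : 0 < k) :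
    ∃ C : ℝ, 1 ≤ C ∧
      ∀ r s : ℝ, 0 < r → 0 < s → s < r / 5 →
        ∀ x : Fin k → Euc n, Function.Injective x →
          (∀ i, x i ∈ Metric.closedBall (0 : Euc n) r) →
          ENNReal.ofReal (C⁻¹ * s ^ (n * k)) ≤
              volume {w : Fin k → Euc n |
                (∀ i, w i ∈ Metric.closedBall (0 : Euc n) r) ∧
                ∃ σ : Equiv.Perm (Fin k), ∑ i, dist (w i) (x (σ i)) ^ 2 < s ^ 2} ∧
            volume {w : Fin k → Euc n |
                (∀ i, w i ∈ Metric.closedBall (0 : Euc n) r) ∧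
                ∃ σ : Equiv.Perm (Fin k), ∑ i, dist (w i) (x (σ i)) ^ 2 < s ^ 2} ≤
              ENNReal.ofReal (C * s ^ (n * k)) := by
  haveI : Nonempty (Fin k) := Fin.pos_iff_nonempty.mp hk
  haveI : Nontrivial (Euc n) := Module.nontrivial_of_finrank_pos
    (R := ℝ) (by rw [finrank_euclideanSpace_fin]; exact hn)
  have hrank : Module.finrank ℝ (Euc n) = n := finrank_euclideanSpace_fin
  set v : ℝ≥0∞ := volume (Metric.ball (0 : Euc n) 1) with hv
  have hv_pos : 0 < v := measure_ball_pos _ _ one_pos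
  have hv_lt : v < ∞ := measure_ball_lt_top
  set V : ℝ := v.toReal with hV
  have hVpos : 0 < V := ENNReal.toReal_pos hv_pos.ne' hv_lt.ne
  have hvV : v = ENNReal.ofReal V := (ENNReal.ofReal_toReal hv_lt.ne).symm
  set K : ℝ := Real.sqrt k with hKdef
  have hK1 : 1 ≤ K := by
    rw [hKdef]
    have : (1 : ℝ) ≤ (k : ℝ) := by exact_mod_cast hk
    nlinarith [Real.sq_sqrt (by positivity : (0:ℝ) ≤ (k:ℝ)),
      Real.sqrt_nonneg (k : ℝ)]
  have hK0 : 0 < K := lt_of_lt_of_le one_pos hK1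
  have hKsq : K ^ 2 = (k : ℝ) := Real.sq_sqrt (by positivity)
  set C : ℝ := max 1 (max ((k.factorial : ℝ) * V ^ k) ((V ^ k)⁻¹ * (2 * K) ^ (n * k)))
    with hC
  have hC1 : 1 ≤ C := le_max_left _ _
  have hC0 : 0 < C := lt_of_lt_of_le one_pos hC1
  refine ⟨C, hC1, ?_⟩
  intro r s hr hs hsr x hinj hxball
  set S : Set (Fin k → Euc n) := {w : Fin k → Euc n |
      (∀ i, w i ∈ Metric.closedBall (0 : Euc n) r) ∧
      ∃ σ : Equiv.Perm (Fin k), ∑ i, dist (w i) (x (σ i)) ^ 2 < s ^ 2} with hS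
  have hball : ∀ (y : Euc n) (u : ℝ), 0 ≤ u →
      volume (Metric.ball y u) = ENNReal.ofReal (u ^ n) * v := by
    intro y u hu
    rw [Measure.addHaar_ball volume y hu, hrank]
  constructor
  · -- lower bound
    set ε : ℝ := s / (2 * r * K) with hε
    set t : ℝ := s / (2 * K) with ht
    have ht0 : 0 < t := by positivity
    have hε0 : 0 < ε := by positivity
    have hεr : ε * r = t := by
      rw [hε, ht]; field_simp
    have hε1 : ε ≤ 1 := by
      rw [hε]
      rw [div_le_one (by positivity)]
      nlinarith
    set y : Fin k → Euc n := fun i => (1 - ε) • x i with hy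
    have hsub : (Set.univ.pi fun i => Metric.ball (y i) t) ⊆ S := by
      intro w hw
      have hw' : ∀ i, dist (w i) (y i) < t := by
        intro i; exact hw i (Set.mem_univ i)
      have hdyx : ∀ i, dist (y i) (x i) ≤ t := by
        intro i
        have : dist (y i) (x i) = ε * ‖x i‖ := by
          rw [hy, dist_eq_norm]
          have : (1 - ε) • x i - x i = (-ε) • x i := by
            module
          rw [this, norm_smul]
          simp [abs_of_pos hε0]
        rw [this]
        have hxr : ‖x i‖ ≤ r := by
          have := hxball i
          simpa [mem_closedBall, dist_zero_right] using this
        calc ε * ‖x i‖ ≤ ε * r := by nlinarith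
          _ = t := hεr
      constructor
      · intro i
        have hyn : ‖y i‖ ≤ (1 - ε) * r := by
          rw [hy, norm_smul]
          have hxr : ‖x i‖ ≤ r := by
            have := hxball i
            simpa [mem_closedBall, dist_zero_right] using this
          have h1ε : 0 ≤ 1 - ε := by linarith
          calc |1 - ε| * ‖x i‖ = (1 - ε) * ‖x i‖ := by rw [abs_of_nonneg h1ε]
            _ ≤ (1 - ε) * r := by nlinarith [norm_nonneg (x i)]
        have h1 : ‖w i‖ ≤ dist (w i) (y i) + ‖y i‖ := by
          calc ‖w i‖ = dist (w i) 0 := by rw [dist_zero_right]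
            _ ≤ dist (w i) (y i) + dist (y i) 0 := dist_triangle _ _ _
            _ = dist (w i) (y i) + ‖y i‖ := by rw [dist_zero_right]
        have h2 : ‖w i‖ ≤ r := by nlinarith [hw' i, hεr]
        simpa [mem_closedBall, dist_zero_right] using h2
      · refine ⟨Equiv.refl _, ?_⟩
        have hterm : ∀ i : Fin k, dist (w i) (x i) ^ 2 < s ^ 2 / k := by
          intro i
          have hd : dist (w i) (x i) < 2 * t :=
            calc dist (w i) (x i) ≤ dist (w i) (y i) + dist (y i) (x i) := dist_triangle _ _ _
              _ < t + t := by have := hw' i; have := hdyx i; linarith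
              _ = 2 * t := by ring
          have h2t : 2 * t = s / K := by rw [ht]; field_simp
          have : dist (w i) (x i) ^ 2 < (s / K) ^ 2 := by
            rw [← h2t]
            exact pow_lt_pow_left₀ hd dist_nonneg (by norm_num)
          calc dist (w i) (x i) ^ 2 < (s / K) ^ 2 := this
            _ = s ^ 2 / k := by rw [div_pow, hKsq]
        calc ∑ i, dist (w i) (x ((Equiv.refl (Fin k)) i)) ^ 2
            = ∑ i, dist (w i) (x i) ^ 2 := by simp
          _ < ∑ _i : Fin k, s ^ 2 / k :=
              Finset.sum_lt_sum_of_nonempty (Finset.univ_nonempty) (fun i _ => hterm i)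
          _ = k * (s ^ 2 / k) := by
              rw [Finset.sum_const, Finset.card_univ, Fintype.card_fin, nsmul_eq_mul]
          _ = s ^ 2 := by field_simp
    calc ENNReal.ofReal (C⁻¹ * s ^ (n * k))
        ≤ volume (Set.univ.pi fun i => Metric.ball (y i) t) := by
          rw [volume_pi_pi]
          have : ∀ i : Fin k, volume (Metric.ball (y i) t) = ENNReal.ofReal (t ^ n) * v :=
            fun i => hball (y i) t ht0.le
          rw [Finset.prod_congr rfl (fun i _ => this i), Finset.prod_const,
            Finset.card_univ, Fintype.card_fin, hvV,
            ← ENNReal.ofReal_mul (by positivity), ← ENNReal.ofReal_pow (by positivity)]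
          apply ENNReal.ofReal_le_ofReal
          have htpow : (t ^ n * V) ^ k = s ^ (n * k) / (2 * K) ^ (n * k) * V ^ k := by
            rw [mul_pow, ← pow_mul, ht, div_pow]
          rw [htpow]
          have hCge : (V ^ k)⁻¹ * (2 * K) ^ (n * k) ≤ C :=
            le_trans (le_max_right _ _) (le_max_right _ _)
          have hCinv : C⁻¹ ≤ V ^ k / (2 * K) ^ (n * k) := by
            calc C⁻¹ ≤ ((V ^ k)⁻¹ * (2 * K) ^ (n * k))⁻¹ :=
                  inv_anti₀ (by positivity) hCge
              _ = V ^ k / (2 * K) ^ (n * k) := by field_simp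
          calc C⁻¹ * s ^ (n * k) ≤ V ^ k / (2 * K) ^ (n * k) * s ^ (n * k) := by
                have : (0:ℝ) ≤ s ^ (n * k) := by positivity
                nlinarith
            _ = s ^ (n * k) / (2 * K) ^ (n * k) * V ^ k := by ring
      _ ≤ volume S := measure_mono hsub
  · -- upper bound
    have hsub : S ⊆ ⋃ σ : Equiv.Perm (Fin k),
        Set.univ.pi fun i => Metric.ball (x (σ i)) s := by
      rintro w ⟨-, σ, hσ⟩
      refine Set.mem_iUnion.2 ⟨σ, fun i _ => ?_⟩
      have h1 : dist (w i) (x (σ i)) ^ 2 ≤ ∑ j, dist (w j) (x (σ j)) ^ 2 :=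
        Finset.single_le_sum (f := fun j => dist (w j) (x (σ j)) ^ 2) (fun j _ => by positivity) (Finset.mem_univ i)
      have h2 : dist (w i) (x (σ i)) ^ 2 < s ^ 2 := lt_of_le_of_lt h1 hσ
      exact mem_ball.2 (lt_of_pow_lt_pow_left₀ 2 hs.le h2)
    calc volume S ≤ volume (⋃ σ : Equiv.Perm (Fin k),
          Set.univ.pi fun i => Metric.ball (x (σ i)) s) := measure_mono hsub
      _ ≤ ∑ σ : Equiv.Perm (Fin k), volume (Set.univ.pi fun i => Metric.ball (x (σ i)) s) :=
          measure_iUnion_fintype_le _ _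
      _ = ∑ _σ : Equiv.Perm (Fin k), ENNReal.ofReal (s ^ (n * k) * V ^ k) := by
          refine Finset.sum_congr rfl (fun σ _ => ?_)
          rw [volume_pi_pi]
          have : ∀ i : Fin k, volume (Metric.ball (x (σ i)) s) = ENNReal.ofReal (s ^ n) * v :=
            fun i => hball _ s hs.le
          rw [Finset.prod_congr rfl (fun i _ => this i), Finset.prod_const,
            Finset.card_univ, Fintype.card_fin, hvV,
            ← ENNReal.ofReal_mul (by positivity), ← ENNReal.ofReal_pow (by positivity)]
          congr 1
          rw [mul_pow, ← pow_mul]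
      _ = (k.factorial : ℝ≥0∞) * ENNReal.ofReal (s ^ (n * k) * V ^ k) := by
          rw [Finset.sum_const, Finset.card_univ, Fintype.card_perm, Fintype.card_fin,
            nsmul_eq_mul]
      _ ≤ ENNReal.ofReal (C * s ^ (n * k)) := by
          rw [← ENNReal.ofReal_natCast, ← ENNReal.ofReal_mul (by positivity)]
          apply ENNReal.ofReal_le_ofReal
          have hCge : (k.factorial : ℝ) * V ^ k ≤ C :=
            le_trans (le_max_left _ _) (le_max_right _ _)
          have : (0:ℝ) ≤ s ^ (n * k) := by positivity
          nlinarith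
end
end
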